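/- Let n ≥ 1, δ ∈ (0,1], θ ∈ (0,δ]. Let F₁, F₂, F₃ : [0,∞) → [0,∞) be bounded with F₁ non-decreasing and F₂, F₃ non-increasing. Let J, K ⊂ ℝ^n be cubes with K ⊂ J, and let ℓ > 0 satisfy d(K, ℝ^n∖J) ≥ ℓ ≥ ℓ(K). Then ∫_{ℝ^n∖J} ∫_{3K} ∫_K F₁(|x−c_K|) F₂(|x−y|+|x−z|) F₃(1 + (|x+y|+|x+z|)/(1+|x−y|+|x−z|)) · ℓ(K)^δ / (|x−y|+|x−z|)^{2n+δ} dx dy dz ≤ C F₁(ℓ(K)) F₂(ℓ(K)) F̃₃(J) |K| (ℓ(K)/ℓ)^δ, where the integral is with respect to Lebesgue measure in x ∈ K, y ∈ 3K, z ∈ ℝ^n∖J, and C depends only on n, δ and θ. -/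
import Mathlib


open MeasureTheory Set
open scoped ENNReal NNReal

noncomputable section

abbrev Rn (n : ℕ) := Fin n → ℝ

/-- A (half-open, axis-parallel) cube in `ℝⁿ` (with the `ℓ^∞` metric),
given by its lower-left corner and its (positive) sidelength. -/
structure Cube (n : ℕ) where
  corner : Fin n → ℝ
  len : ℝ
  len_pos : 0 < len

namespace Cube

/-- The underlying set `∏_i [aᵢ, aᵢ + ℓ)` of a cube. -/
def toSet {n : ℕ} (I : Cube n) : Set (Rn n) :=
  {x | ∀ i, I.corner i ≤ x i ∧ x i < I.corner i + I.len}

/-- The center of a cube. -/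
def center {n : ℕ} (I : Cube n) : Rn n := fun i => I.corner i + I.len / 2

/-- `λI`: the cube with the same center and sidelength `λ ℓ(I)`. -/
def dilate {n : ℕ} (I : Cube n) (lam : ℝ) (hlam : 0 < lam) : Cube n :=
  ⟨fun i => I.center i - lam * I.len / 2, lam * I.len, mul_pos hlam I.len_pos⟩

end Cube

/-- The unit cube `𝕀 = [-1/2, 1/2)^n`. -/
def unitCube (n : ℕ) : Cube n := ⟨fun _ => -(1 / 2 : ℝ), 1, one_pos⟩

/-- The distance `d(E, F) = inf {|x - y| : x ∈ E, y ∈ F}` between two sets. -/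
def sDist {α : Type*} [PseudoMetricSpace α] (E F : Set α) : ℝ :=
  sInf ((fun q : α × α => dist q.1 q.2) '' (E ×ˢ F))

/-- The relative distance `rd(I, J) = d(I, J) / max{ℓ(I), ℓ(J)}` between two cubes. -/
def relDist {n : ℕ} (I J : Cube n) : ℝ :=
  sDist I.toSet J.toSet / max I.len J.len

/-- `F̃₂(t) = Σ_{k=0}^∞ 2^{-kθ} F₂(2^{-k} t)`. -/
def Ft2 (θ : ℝ) (F₂ : ℝ → ℝ) (t : ℝ) : ℝ :=
  ∑' k : ℕ, (2 : ℝ) ^ (-(k : ℝ) * θ) * F₂ ((2 : ℝ) ^ (-(k : ℝ)) * t)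

/-- `F̃₃(Q) = Σ_{k=0}^∞ 2^{-kθ} F₃(rd(2^k Q, 𝕀))`. -/
def Ft3 {n : ℕ} (θ : ℝ) (F₃ : ℝ → ℝ) (Q : Cube n) : ℝ :=
  ∑' k : ℕ, (2 : ℝ) ^ (-(k : ℝ) * θ) *
    F₃ (relDist (Q.dilate ((2 : ℝ) ^ k) (by positivity)) (unitCube n))


lemma cube_center_mem {n : ℕ} (I : Cube n) : I.center ∈ I.toSet := by
  intro i
  have := I.len_pos
  constructor
  · simp only [Cube.center]; linarith
  · simp only [Cube.center]; linarith

lemma cube_dist_le {n : ℕ} (I : Cube n) {x y : Rn n} (hx : x ∈ I.toSet) (hy : y ∈ I.toSet) :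
    dist x y ≤ I.len := by
  rw [dist_pi_le_iff I.len_pos.le]
  intro i
  have h1 := hx i
  have h2 := hy i
  rw [Real.dist_eq, abs_le]
  constructor <;> linarith [h1.1, h1.2, h2.1, h2.2]

lemma cube_dilate_center {n : ℕ} (I : Cube n) (lam : ℝ) (h : 0 < lam) :
    (I.dilate lam h).center = I.center := by
  funext i
  simp only [Cube.dilate, Cube.center]
  ring

lemma sDist_nonneg' {α : Type*} [PseudoMetricSpace α] (E F : Set α) : 0 ≤ sDist E F :=
  Real.sInf_nonneg (by rintro x ⟨q, _, rfl⟩; exact dist_nonneg)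

lemma sDist_le_dist {α : Type*} [PseudoMetricSpace α] {E F : Set α} {x y : α}
    (hx : x ∈ E) (hy : y ∈ F) : sDist E F ≤ dist x y :=
  csInf_le ⟨0, by rintro r ⟨q, _, rfl⟩; exact dist_nonneg⟩ ⟨(x, y), ⟨hx, hy⟩, rfl⟩

lemma cube_volume {n : ℕ} (I : Cube n) : volume I.toSet = ENNReal.ofReal (I.len ^ n) := by
  have h : I.toSet = Set.pi Set.univ (fun i => Set.Ico (I.corner i) (I.corner i + I.len)) := by
    ext x; simp [Cube.toSet, Set.mem_pi, Set.mem_Ico]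
  rw [h, volume_pi_pi]
  simp only [Real.volume_Ico, add_sub_cancel_left]
  rw [Finset.prod_const, ← ENNReal.ofReal_pow I.len_pos.le]
  simp

lemma zero_mem_unitCube (n : ℕ) : (0 : Rn n) ∈ (unitCube n).toSet := by
  intro i
  constructor <;> norm_num [unitCube]

lemma key_real (a c N T : ℝ) (ha : 0 < a) (hc : 0 ≤ c) (hN : 0 ≤ N)
    (hN2 : 2*c - 2*a ≤ N) (hT1 : 1 ≤ T) (hT : T ≤ 1 + 4*a) :
    c / max (16*a) 1 ≤ 1 + N / T := by
  have hT0 : 0 < T := by linarith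
  have hmax : 0 < max (16*a) 1 := lt_max_of_lt_right one_pos
  have hNT : 0 ≤ N / T := div_nonneg hN hT0.le
  rw [div_le_iff₀ hmax]
  rcases le_or_gt c a with h | h
  · rcases le_total 1 (16*a) with h16 | h16
    · rw [max_eq_left h16]
      nlinarith
    · rw [max_eq_right h16]
      nlinarith
  · have h4a : (0:ℝ) < 1 + 4*a := by linarith
    have hv : (2*c-2*a)/(1+4*a) ≤ N/T :=
      div_le_div₀ hN hN2 hT0 hT
    rcases le_total 1 (16*a) with h16 | h16
    · rw [max_eq_left h16]
      have hkey : c ≤ (1 + (2*c-2*a)/(1+4*a)) * (16*a) := by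
        rw [show (1 + (2*c-2*a)/(1+4*a)) * (16*a) = (1+2*a+2*c)*(16*a)/(1+4*a) by
          field_simp; ring, le_div_iff₀ h4a]
        nlinarith [mul_nonneg hc (by linarith : (0:ℝ) ≤ a - 1/16)]
      calc c ≤ (1 + (2*c-2*a)/(1+4*a)) * (16*a) := hkey
        _ ≤ (1 + N/T) * (16*a) := by
            apply mul_le_mul_of_nonneg_right (by linarith) (by linarith)
    · rw [max_eq_right h16, mul_one]
      have hkey : c ≤ 1 + (2*c-2*a)/(1+4*a) := by
        rw [show (1:ℝ) + (2*c-2*a)/(1+4*a) = (1+2*a+2*c)/(1+4*a) by field_simp; ring,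
          le_div_iff₀ h4a]
        nlinarith [mul_nonneg hc (by linarith : (0:ℝ) ≤ 1/16 - a)]
      linarith

lemma rpow_prod_le {S l m δ θ : ℝ} (n : ℕ) (hl : 0 < l) (hm : 0 < m) (hθ0 : 0 < θ)
    (hθδ : θ ≤ δ) (hlS : l ≤ S) (hmS : m ≤ S) :
    m ^ (n:ℝ) * m ^ θ * l ^ ((n:ℝ) + δ - θ) ≤ S ^ (2*(n:ℝ) + δ) := by
  have hS : 0 < S := lt_of_lt_of_le hl hlS
  have hexp : S ^ (2*(n:ℝ)+δ) = S ^ (n:ℝ) * S ^ θ * S ^ ((n:ℝ)+δ-θ) := by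
    rw [← Real.rpow_add hS, ← Real.rpow_add hS]
    ring_nf
  rw [hexp]
  have h1 : m ^ (n:ℝ) ≤ S ^ (n:ℝ) := Real.rpow_le_rpow hm.le hmS (by positivity)
  have h2 : m ^ θ ≤ S ^ θ := Real.rpow_le_rpow hm.le hmS hθ0.le
  have h3 : l ^ ((n:ℝ)+δ-θ) ≤ S ^ ((n:ℝ)+δ-θ) := Real.rpow_le_rpow hl.le hlS (by linarith)
  have := mul_le_mul (mul_le_mul h1 h2 (by positivity) (by positivity)) h3 (by positivity)
    (by positivity)
  exact this

lemma Dk_le {l δ θ : ℝ} (n k : ℕ) (hl : 0 < l) (hθ0 : 0 < θ) (hθ1 : θ ≤ 1) :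
    (2:ℝ)^((k:ℝ)*θ) * ((2:ℝ)^k*l/4)^(n:ℝ) * l^((n:ℝ)+δ) / 4 ≤
    ((2:ℝ)^k*l/4)^(n:ℝ) * ((2:ℝ)^k*l/4)^θ * l^((n:ℝ)+δ-θ) := by
  have hm0 : (0:ℝ) < (2:ℝ)^k*l/4 := by positivity
  have h1 : ((2:ℝ)^k*l/4)^θ = (2:ℝ)^((k:ℝ)*θ) * (l/4)^θ := by
    rw [show (2:ℝ)^k*l/4 = (2:ℝ)^k*(l/4) by ring,
      Real.mul_rpow (by positivity) (by positivity), ← Real.rpow_natCast 2 k,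
      ← Real.rpow_mul (by norm_num)]
  have h2 : (l/4)^θ * l^((n:ℝ)+δ-θ) = l^((n:ℝ)+δ) / (4:ℝ)^θ := by
    rw [Real.div_rpow hl.le (by norm_num), div_mul_eq_mul_div, ← Real.rpow_add hl]
    ring_nf
  have h3 : (4:ℝ)^θ ≤ 4 := by
    calc (4:ℝ)^θ ≤ (4:ℝ)^(1:ℝ) := Real.rpow_le_rpow_of_exponent_le (by norm_num) hθ1
      _ = 4 := Real.rpow_one 4
  have h4 : l^((n:ℝ)+δ) / 4 ≤ l^((n:ℝ)+δ) / (4:ℝ)^θ :=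
    div_le_div_of_nonneg_left (by positivity) (by positivity) h3
  calc (2:ℝ)^((k:ℝ)*θ) * ((2:ℝ)^k*l/4)^(n:ℝ) * l^((n:ℝ)+δ) / 4
      = ((2:ℝ)^k*l/4)^(n:ℝ) * ((2:ℝ)^((k:ℝ)*θ)) * (l^((n:ℝ)+δ) / 4) := by ring
    _ ≤ ((2:ℝ)^k*l/4)^(n:ℝ) * ((2:ℝ)^((k:ℝ)*θ)) * (l^((n:ℝ)+δ) / (4:ℝ)^θ) := by
        apply mul_le_mul_of_nonneg_left h4 (by positivity)
    _ = ((2:ℝ)^k*l/4)^(n:ℝ) * ((2:ℝ)^k*l/4)^θ * l^((n:ℝ)+δ-θ) := by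
        rw [h1, ← h2]; ring

set_option maxHeartbeats 4000000

/-- the nested-cubes integral estimate `ℛ¹`, with `y` ranging over `3K`. -/
theorem nested_integral_estimate_near
    (n : ℕ) (hn : 1 ≤ n) (δ θ : ℝ)
    (hδ0 : 0 < δ) (hδ1 : δ ≤ 1) (hθ0 : 0 < θ) (hθδ : θ ≤ δ) :
    ∃ C : ℝ, 0 < C ∧
      ∀ F₁ F₂ F₃ : ℝ → ℝ,
        (∀ t, 0 ≤ F₁ t) → (∀ t, 0 ≤ F₂ t) → (∀ t, 0 ≤ F₃ t) →
        BddAbove (Set.range F₁) → BddAbove (Set.range F₂) → BddAbove (Set.range F₃) →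
        MonotoneOn F₁ (Set.Ici 0) → AntitoneOn F₂ (Set.Ici 0) → AntitoneOn F₃ (Set.Ici 0) →
        ∀ J K : Cube n, ∀ l : ℝ,
          K.toSet ⊆ J.toSet →
          K.len ≤ l → l ≤ sDist K.toSet (J.toSet)ᶜ →
          (∫⁻ z in (J.toSet)ᶜ, ∫⁻ y in (K.dilate 3 (by norm_num)).toSet, ∫⁻ x in K.toSet,
              ENNReal.ofReal
                (F₁ (dist x K.center) * F₂ (dist x y + dist x z) *
                  F₃ (1 + (‖x + y‖ + ‖x + z‖) / (1 + dist x y + dist x z)) *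
                  K.len ^ δ / (dist x y + dist x z) ^ (2 * (n : ℝ) + δ))) ≤
            ENNReal.ofReal
              (C * F₁ K.len * F₂ K.len * Ft3 θ F₃ J * (volume K.toSet).toReal *
                (K.len / l) ^ δ) := by
  classical
  refine ⟨128 * 24 ^ n, by positivity, ?_⟩
  intro F₁ F₂ F₃ h1p h2p h3p hb1 hb2 hb3 hm1 hm2 hm3 J K l hKJ hKl hlsd
  obtain ⟨B₃, hB₃⟩ := hb3
  have hB₃le : ∀ t, F₃ t ≤ B₃ := fun t => hB₃ ⟨t, rfl⟩
  have hlK : 0 < K.len := K.len_pos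
  have hl : 0 < l := lt_of_lt_of_le hlK hKl
  have hlJ : 0 < J.len := J.len_pos
  have hθ1 : θ ≤ 1 := le_trans hθδ hδ1
  have hcKK : K.center ∈ K.toSet := cube_center_mem K
  have hcKJ : K.center ∈ J.toSet := hKJ hcKK
  -- l ≤ J.len
  have hlJl : l ≤ J.len := by
    have i0 : Fin n := ⟨0, hn⟩
    set z : Rn n := Function.update K.center i0 (J.corner i0 + J.len) with hzdef
    have hz : z ∈ (J.toSet)ᶜ := by
      intro hzJ
      have := (hzJ i0).2
      rw [hzdef, Function.update_self] at this
      exact lt_irrefl _ this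
    have hdz : dist K.center z ≤ J.len := by
      rw [dist_pi_le_iff hlJ.le]
      intro i
      rcases eq_or_ne i i0 with rfl | hne
      · rw [hzdef]
        simp only [Function.update_self]
        rw [Real.dist_eq, abs_le]
        have h := hcKJ i
        constructor <;> linarith [h.1, h.2]
      · rw [hzdef, Function.update_of_ne hne]
        simp [hlJ.le]
    exact le_trans hlsd (le_trans (sDist_le_dist hcKK hz) hdz)
  -- Ft3 summand
  set g : ℕ → ℝ := fun j => (2:ℝ)^(-(j:ℝ)*θ) *
    F₃ (relDist (J.dilate ((2:ℝ)^j) (by positivity)) (unitCube n)) with hgdef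
  have hFt3 : Ft3 θ F₃ J = ∑' j, g j := rfl
  have hg0 : ∀ j, 0 ≤ g j := fun j =>
    mul_nonneg (Real.rpow_nonneg (by norm_num) _) (h3p _)
  have hgs : Summable g := by
    have hgeom : Summable (fun j : ℕ => B₃ * ((2:ℝ)^(-θ))^j) :=
      (summable_geometric_of_lt_one (Real.rpow_nonneg (by norm_num) _)
        (Real.rpow_lt_one_of_one_lt_of_neg one_lt_two (by linarith))).mul_left B₃
    apply Summable.of_nonneg_of_le hg0 _ hgeom
    intro j
    have he : (2:ℝ)^(-(j:ℝ)*θ) = ((2:ℝ)^(-θ))^j := by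
      rw [← Real.rpow_natCast ((2:ℝ)^(-θ)) j, ← Real.rpow_mul (by norm_num : (0:ℝ) ≤ 2)]
      ring_nf
    calc g j = (2:ℝ)^(-(j:ℝ)*θ) * F₃ _ := rfl
      _ ≤ (2:ℝ)^(-(j:ℝ)*θ) * B₃ :=
          mul_le_mul_of_nonneg_left (hB₃le _) (Real.rpow_nonneg (by norm_num) _)
      _ = B₃ * ((2:ℝ)^(-θ))^j := by rw [he]; ring
  -- annuli
  set A : ℕ → Set (Rn n) := fun k =>
    {z | (2:ℝ)^k * (l/2) ≤ dist z K.center ∧ dist z K.center < (2:ℝ)^(k+1) * (l/2)} with hAdef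
  have hcover : (J.toSet)ᶜ ⊆ ⋃ k, (A k ∩ (J.toSet)ᶜ) := by
    intro z hz
    have hd : l ≤ dist z K.center := by
      rw [dist_comm]; exact le_trans hlsd (sDist_le_dist hcKK hz)
    have hex : ∃ m : ℕ, dist z K.center < (2:ℝ)^(m+1) * (l/2) := by
      obtain ⟨m, hm⟩ := pow_unbounded_of_one_lt (dist z K.center / (l/2)) one_lt_two
      refine ⟨m, ?_⟩
      rw [div_lt_iff₀ (by linarith)] at hm
      have h2m : (2:ℝ)^m ≤ 2^(m+1) := by
        apply pow_le_pow_right₀ one_le_two (Nat.le_succ m)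
      nlinarith
    refine Set.mem_iUnion.mpr ⟨Nat.find hex, ⟨⟨?_, Nat.find_spec hex⟩, hz⟩⟩
    rcases Nat.eq_zero_or_pos (Nat.find hex) with h0 | h0
    · rw [h0]; norm_num; linarith
    · have hlt : Nat.find hex - 1 < Nat.find hex := Nat.sub_lt h0 one_pos
      have hnot := Nat.find_min hex hlt
      have heq : Nat.find hex - 1 + 1 = Nat.find hex := Nat.succ_pred_eq_of_pos h0
      rw [heq] at hnot
      exact not_lt.mp hnot
  -- scales
  set mf : ℕ → ℝ := fun k => (2:ℝ)^k * l / 4 with hmdef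
  have hmf0 : ∀ k, 0 < mf k := fun k => by simp only [hmdef]; positivity
  set Dk : ℕ → ℝ := fun k => (2:ℝ)^((k:ℝ)*θ) * (mf k)^(n:ℝ) * l^((n:ℝ)+δ) / 4 with hDdef
  have hDk0 : ∀ k, 0 < Dk k := fun k => by
    simp only [hDdef, hmdef]; positivity
  set ρ : ℕ → ℝ := fun k =>
    relDist (J.dilate ((2:ℝ)^(k+5)) (by positivity)) (unitCube n) with hρdef
  set pb : ℕ → ℝ := fun k => F₁ K.len * F₂ K.len * F₃ (ρ k) * K.len^δ / Dk k with hpbdef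
  have hpb0 : ∀ k, 0 ≤ pb k := fun k => by
    simp only [hpbdef]
    exact div_nonneg (mul_nonneg (mul_nonneg (mul_nonneg (h1p _) (h2p _)) (h3p _))
      (Real.rpow_nonneg hlK.le δ)) (hDk0 k).le
  set tk : ℕ → ℝ := fun k => pb k * K.len^n * (3*K.len)^n * ((2:ℝ)^(k+1)*l)^n with htdef
  set uk : ℕ → ℝ := fun k =>
    (128*24^n * (F₁ K.len * F₂ K.len) * (K.len^n * (K.len/l)^δ)) * g (k+5) with hudef
  -- pointwise bound
  have hpoint : ∀ k : ℕ, ∀ z ∈ A k ∩ (J.toSet)ᶜ, ∀ y ∈ (K.dilate 3 (by norm_num)).toSet,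
      ∀ x ∈ K.toSet,
      F₁ (dist x K.center) * F₂ (dist x y + dist x z) *
        F₃ (1 + (‖x + y‖ + ‖x + z‖) / (1 + dist x y + dist x z)) *
        K.len ^ δ / (dist x y + dist x z) ^ (2 * (n : ℝ) + δ) ≤ pb k := by
    intro k z hz y hy x hx
    have hdxz : l ≤ dist x z := le_trans hlsd (sDist_le_dist hx hz.2)
    have hdxy0 : (0:ℝ) ≤ dist x y := dist_nonneg
    have hxcK : dist x K.center ≤ K.len := cube_dist_le K hx hcKK
    have hycK : dist y K.center ≤ 3 * K.len := by
      have h := cube_dist_le (K.dilate 3 (by norm_num)) hy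
        (cube_center_mem (K.dilate 3 (by norm_num)))
      rw [cube_dilate_center] at h
      exact h
    have hF1 : F₁ (dist x K.center) ≤ F₁ K.len :=
      hm1 (Set.mem_Ici.mpr dist_nonneg) (Set.mem_Ici.mpr hlK.le) hxcK
    have hF2 : F₂ (dist x y + dist x z) ≤ F₂ K.len :=
      hm2 (Set.mem_Ici.mpr hlK.le) (Set.mem_Ici.mpr (by linarith)) (by linarith)
    -- geometry for F₃
    have hxcJ : dist x J.center ≤ J.len := cube_dist_le J (hKJ hx) (cube_center_mem J)
    have hcKcJ : dist K.center J.center ≤ J.len := cube_dist_le J hcKJ (cube_center_mem J)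
    have hzcK : dist z K.center < (2:ℝ)^k * l := by
      calc dist z K.center < (2:ℝ)^(k+1) * (l/2) := hz.1.2
        _ = (2:ℝ)^k * l := by rw [pow_succ]; ring
    have h2k : (1:ℝ) ≤ (2:ℝ)^k := one_le_pow₀ one_le_two
    have hzcJ : dist z J.center ≤ (2:ℝ)^k * l + J.len := by
      calc dist z J.center ≤ dist z K.center + dist K.center J.center := dist_triangle _ _ _
        _ ≤ (2:ℝ)^k * l + J.len := by linarith [hzcK.le]
    have hKJlen : K.len ≤ J.len := le_trans hKl hlJl
    have hklJ : (2:ℝ)^k * l ≤ (2:ℝ)^k * J.len :=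
      mul_le_mul_of_nonneg_left hlJl (by positivity)
    set a := (2:ℝ)^(k+1) * J.len with hadef
    have ha : 0 < a := by rw [hadef]; positivity
    have hpa : (2:ℝ)^(k+1) = 2 * (2:ℝ)^k := by rw [pow_succ]; ring
    have haJ : 2 * J.len ≤ a := by
      rw [hadef, hpa]; nlinarith
    have hakl : (2:ℝ)^k * l ≤ a / 2 := by
      rw [hadef, hpa]; nlinarith
    have hN2 : 2 * dist J.center (0 : Rn n) - 2*a ≤ ‖x + y‖ + ‖x + z‖ := by
      have he : J.center + J.center = (x + z) + ((J.center - x) + (J.center - z)) := by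
        ring
      have htri : ‖J.center + J.center‖ ≤ ‖x + z‖ + (dist J.center x + dist J.center z) := by
        calc ‖J.center + J.center‖
            = ‖(x + z) + ((J.center - x) + (J.center - z))‖ := by rw [← he]
          _ ≤ ‖x + z‖ + ‖(J.center - x) + (J.center - z)‖ := norm_add_le _ _
          _ ≤ ‖x + z‖ + (‖J.center - x‖ + ‖J.center - z‖) := by
              linarith [norm_add_le (J.center - x) (J.center - z)]
          _ = ‖x + z‖ + (dist J.center x + dist J.center z) := by
              rw [dist_eq_norm, dist_eq_norm]
      have h2c : ‖J.center + J.center‖ = 2 * dist J.center (0 : Rn n) := by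
        rw [dist_zero_right, ← two_smul ℝ J.center, norm_smul]
        simp
      have hdJx : dist J.center x ≤ J.len := by rw [dist_comm]; exact hxcJ
      have hdJz : dist J.center z ≤ (2:ℝ)^k * l + J.len := by rw [dist_comm]; exact hzcJ
      have hsum : dist J.center x + dist J.center z ≤ 2*a := by
        have : J.len + ((2:ℝ)^k * l + J.len) ≤ 2*a := by linarith
        linarith
      have hxy0 : (0:ℝ) ≤ ‖x + y‖ := norm_nonneg _
      linarith [htri, h2c ▸ htri]
    have hT1 : (1:ℝ) ≤ 1 + dist x y + dist x z := by
      have := dist_nonneg (x := x) (y := z); linarith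
    have hT : 1 + dist x y + dist x z ≤ 1 + 4*a := by
      have hdxy : dist x y ≤ 4 * K.len := by
        calc dist x y ≤ dist x K.center + dist K.center y := dist_triangle _ _ _
          _ ≤ K.len + 3*K.len := by rw [dist_comm K.center y]; linarith
          _ = 4*K.len := by ring
      have h1 : 4*K.len ≤ 2*a := by
        have : K.len ≤ J.len := hKJlen
        linarith [haJ]
      have hdxzU : dist x z ≤ J.len + ((2:ℝ)^k * l + J.len) := by
        calc dist x z ≤ dist x J.center + dist J.center z := dist_triangle _ _ _
          _ ≤ J.len + ((2:ℝ)^k*l + J.len) := by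
              rw [dist_comm J.center z]; linarith [hzcJ]
      have h2 : dist x z ≤ 2*a := by linarith
      linarith
    have hρle : ρ k ≤ dist J.center (0 : Rn n) / max (16*a) 1 := by
      have hsd : sDist (J.dilate ((2:ℝ)^(k+5)) (by positivity)).toSet (unitCube n).toSet
          ≤ dist J.center (0:Rn n) := by
        have hcmem : J.center ∈ (J.dilate ((2:ℝ)^(k+5)) (by positivity)).toSet := by
          have h := cube_center_mem (J.dilate ((2:ℝ)^(k+5)) (by positivity))
          rwa [cube_dilate_center] at h
        exact sDist_le_dist hcmem (zero_mem_unitCube n)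
      have h16a : (2:ℝ)^(k+5) * J.len = 16*a := by
        rw [hadef, show k+5 = (k+1)+4 by omega, pow_add]
        norm_num
        ring
      have hMpos : (0:ℝ) < max (16*a) 1 := lt_max_of_lt_right one_pos
      simp only [hρdef]
      show sDist (J.dilate ((2:ℝ)^(k+5)) (by positivity)).toSet (unitCube n).toSet /
          max ((2:ℝ)^(k+5) * J.len) 1 ≤ _
      rw [h16a]
      exact (div_le_div_iff_of_pos_right hMpos).mpr hsd
    have hρ0 : 0 ≤ ρ k := by
      simp only [hρdef]
      show 0 ≤ sDist _ _ / max ((2:ℝ)^(k+5) * J.len) 1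
      exact div_nonneg (sDist_nonneg' _ _) (le_max_of_le_right zero_le_one)
    have harg : ρ k ≤ 1 + (‖x + y‖ + ‖x + z‖) / (1 + dist x y + dist x z) :=
      le_trans hρle (key_real a _ _ _ ha dist_nonneg
        (by positivity) hN2 hT1 hT)
    have hF3 : F₃ (1 + (‖x + y‖ + ‖x + z‖) / (1 + dist x y + dist x z)) ≤ F₃ (ρ k) :=
      hm3 (Set.mem_Ici.mpr hρ0)
        (Set.mem_Ici.mpr (by positivity)) harg
    -- denominator bound
    have hmS : mf k ≤ dist x y + dist x z := by
      rcases le_or_gt ((2:ℝ)^k) 4 with h4 | h4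
      · simp only [hmdef]
        nlinarith [mul_nonneg (sub_nonneg.mpr h4) hl.le]
      · have htr : dist z K.center ≤ dist z x + dist x K.center := dist_triangle _ _ _
        have hlow : (2:ℝ)^k * (l/2) ≤ dist z K.center := hz.1.1
        rw [dist_comm z x] at htr
        simp only [hmdef]
        nlinarith [mul_nonneg (sub_nonneg.mpr h4.le) hl.le, hKl, hxcK]
    have hpow : Dk k ≤ (dist x y + dist x z) ^ (2*(n:ℝ)+δ) := by
      have h1 : Dk k ≤ (mf k)^(n:ℝ) * (mf k)^θ * l^((n:ℝ)+δ-θ) := by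
        simp only [hDdef, hmdef]
        exact Dk_le n k hl hθ0 hθ1
      have h2 : (mf k)^(n:ℝ) * (mf k)^θ * l^((n:ℝ)+δ-θ)
          ≤ (dist x y + dist x z) ^ (2*(n:ℝ)+δ) :=
        rpow_prod_le n hl (hmf0 k) hθ0 hθδ (by linarith) hmS
      linarith
    have hnum : F₁ (dist x K.center) * F₂ (dist x y + dist x z) *
        F₃ (1 + (‖x + y‖ + ‖x + z‖) / (1 + dist x y + dist x z)) * K.len^δ
        ≤ F₁ K.len * F₂ K.len * F₃ (ρ k) * K.len^δ := by
      have hKδ : (0:ℝ) ≤ K.len ^ δ := Real.rpow_nonneg hlK.le δ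
      apply mul_le_mul_of_nonneg_right _ hKδ
      exact mul_le_mul (mul_le_mul hF1 hF2 (h2p _) (h1p _)) hF3 (h3p _)
        (mul_nonneg (h1p _) (h2p _))
    simp only [hpbdef]
    exact div_le_div₀ (mul_nonneg (mul_nonneg (mul_nonneg (h1p _) (h2p _)) (h3p _))
      (Real.rpow_nonneg hlK.le δ)) hnum (hDk0 k) hpow
  -- per-annulus integral bound
  have hstep2 : ∀ k : ℕ,
      (∫⁻ z in A k ∩ (J.toSet)ᶜ, ∫⁻ y in (K.dilate 3 (by norm_num)).toSet, ∫⁻ x in K.toSet,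
        ENNReal.ofReal
          (F₁ (dist x K.center) * F₂ (dist x y + dist x z) *
            F₃ (1 + (‖x + y‖ + ‖x + z‖) / (1 + dist x y + dist x z)) *
            K.len ^ δ / (dist x y + dist x z) ^ (2 * (n : ℝ) + δ)))
      ≤ ENNReal.ofReal (tk k) := by
    intro k
    have hvK : volume K.toSet = ENNReal.ofReal (K.len ^ n) := cube_volume K
    have hv3 : volume (K.dilate 3 (by norm_num : (0:ℝ) < 3)).toSet
        = ENNReal.ofReal ((3*K.len) ^ n) := cube_volume _
    have hsub : A k ∩ (J.toSet)ᶜ ⊆ Metric.closedBall K.center ((2:ℝ)^k * l) := by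
      intro z hz
      rw [Metric.mem_closedBall]
      have := hz.1.2
      have heq : (2:ℝ)^(k+1)*(l/2) = (2:ℝ)^k * l := by rw [pow_succ]; ring
      linarith [heq ▸ this]
    have hvol : volume (A k ∩ (J.toSet)ᶜ) ≤ ENNReal.ofReal (((2:ℝ)^(k+1)*l)^n) := by
      calc volume (A k ∩ (J.toSet)ᶜ)
          ≤ volume (Metric.closedBall K.center ((2:ℝ)^k*l)) := measure_mono hsub
        _ = ENNReal.ofReal (((2:ℝ)^(k+1)*l)^n) := by
            rw [closedBall_pi _ (by positivity), volume_pi_pi]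
            simp only [Real.volume_closedBall]
            rw [Finset.prod_const, ← ENNReal.ofReal_pow (by positivity),
              Finset.card_univ, Fintype.card_fin]
            congr 2
            rw [pow_succ]
            ring
    have hinner : ∀ z ∈ A k ∩ (J.toSet)ᶜ, ∀ y ∈ (K.dilate 3 (by norm_num)).toSet,
        (∫⁻ x in K.toSet, ENNReal.ofReal
          (F₁ (dist x K.center) * F₂ (dist x y + dist x z) *
            F₃ (1 + (‖x + y‖ + ‖x + z‖) / (1 + dist x y + dist x z)) *
            K.len ^ δ / (dist x y + dist x z) ^ (2 * (n : ℝ) + δ)))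
        ≤ ENNReal.ofReal (pb k) * volume K.toSet := by
      intro z hz y hy
      calc (∫⁻ x in K.toSet, ENNReal.ofReal
            (F₁ (dist x K.center) * F₂ (dist x y + dist x z) *
              F₃ (1 + (‖x + y‖ + ‖x + z‖) / (1 + dist x y + dist x z)) *
              K.len ^ δ / (dist x y + dist x z) ^ (2 * (n : ℝ) + δ)))
          ≤ ∫⁻ _x in K.toSet, ENNReal.ofReal (pb k) :=
            setLIntegral_mono measurable_const
              (fun x hx => ENNReal.ofReal_le_ofReal (hpoint k z hz y hy x hx))
        _ = ENNReal.ofReal (pb k) * volume K.toSet := setLIntegral_const _ _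
    have hmid : ∀ z ∈ A k ∩ (J.toSet)ᶜ,
        (∫⁻ y in (K.dilate 3 (by norm_num)).toSet, ∫⁻ x in K.toSet, ENNReal.ofReal
          (F₁ (dist x K.center) * F₂ (dist x y + dist x z) *
            F₃ (1 + (‖x + y‖ + ‖x + z‖) / (1 + dist x y + dist x z)) *
            K.len ^ δ / (dist x y + dist x z) ^ (2 * (n : ℝ) + δ)))
        ≤ ENNReal.ofReal (pb k) * volume K.toSet *
            volume (K.dilate 3 (by norm_num : (0:ℝ) < 3)).toSet := by
      intro z hz
      calc (∫⁻ y in (K.dilate 3 (by norm_num)).toSet, ∫⁻ x in K.toSet, ENNReal.ofReal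
            (F₁ (dist x K.center) * F₂ (dist x y + dist x z) *
              F₃ (1 + (‖x + y‖ + ‖x + z‖) / (1 + dist x y + dist x z)) *
              K.len ^ δ / (dist x y + dist x z) ^ (2 * (n : ℝ) + δ)))
          ≤ ∫⁻ _y in (K.dilate 3 (by norm_num)).toSet,
              ENNReal.ofReal (pb k) * volume K.toSet :=
            setLIntegral_mono measurable_const (hinner z hz)
        _ = ENNReal.ofReal (pb k) * volume K.toSet *
              volume (K.dilate 3 (by norm_num : (0:ℝ) < 3)).toSet := setLIntegral_const _ _
    calc (∫⁻ z in A k ∩ (J.toSet)ᶜ, ∫⁻ y in (K.dilate 3 (by norm_num)).toSet,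
          ∫⁻ x in K.toSet, ENNReal.ofReal
            (F₁ (dist x K.center) * F₂ (dist x y + dist x z) *
              F₃ (1 + (‖x + y‖ + ‖x + z‖) / (1 + dist x y + dist x z)) *
              K.len ^ δ / (dist x y + dist x z) ^ (2 * (n : ℝ) + δ)))
        ≤ ∫⁻ _z in A k ∩ (J.toSet)ᶜ, ENNReal.ofReal (pb k) * volume K.toSet *
            volume (K.dilate 3 (by norm_num : (0:ℝ) < 3)).toSet :=
          setLIntegral_mono measurable_const hmid
      _ = ENNReal.ofReal (pb k) * volume K.toSet *
            volume (K.dilate 3 (by norm_num : (0:ℝ) < 3)).toSet *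
            volume (A k ∩ (J.toSet)ᶜ) := setLIntegral_const _ _
      _ ≤ ENNReal.ofReal (pb k) * volume K.toSet *
            volume (K.dilate 3 (by norm_num : (0:ℝ) < 3)).toSet *
            ENNReal.ofReal (((2:ℝ)^(k+1)*l)^n) := mul_le_mul_right hvol _
      _ = ENNReal.ofReal (tk k) := by
          rw [hvK, hv3, ← ENNReal.ofReal_mul (hpb0 k),
            ← ENNReal.ofReal_mul (mul_nonneg (hpb0 k) (by positivity)),
            ← ENNReal.ofReal_mul (mul_nonneg (mul_nonneg (hpb0 k) (by positivity))
              (by positivity))]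
  -- tk ≤ uk
  have htu : ∀ k, tk k ≤ uk k := by
    intro k
    have hgk5 : g (k+5) = (2:ℝ)^(-((k+5:ℕ):ℝ)*θ) * F₃ (ρ k) := by
      simp only [hgdef, hρdef]
    have hw2 : (1:ℝ)/32 ≤ (2:ℝ)^(-((k+5:ℕ):ℝ)*θ) * (2:ℝ)^((k:ℝ)*θ) := by
      rw [← Real.rpow_add (by norm_num : (0:ℝ) < 2)]
      have he : -((k+5:ℕ):ℝ)*θ + (k:ℝ)*θ = -(5*θ) := by push_cast; ring
      rw [he]
      have hle : (2:ℝ)^(-(5:ℝ)) ≤ (2:ℝ)^(-(5*θ)) :=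
        Real.rpow_le_rpow_of_exponent_le one_le_two (by nlinarith)
      have h32 : (2:ℝ)^(-(5:ℝ)) = 1/32 := by
        rw [Real.rpow_neg (by norm_num), show (5:ℝ) = ((5:ℕ):ℝ) by norm_num,
          Real.rpow_natCast]
        norm_num
      rw [← h32]; exact hle
    have h24 : (24:ℝ)^n = 3^n * 8^n := by rw [← mul_pow]; norm_num
    have h8 : ((2:ℝ)^(k+1)*l)^n = 8^n * (mf k)^n := by
      simp only [hmdef]
      rw [← mul_pow]
      congr 1
      rw [pow_succ]
      ring
    have hmn : (mf k)^((n:ℕ):ℝ) = (mf k)^(n:ℕ) := Real.rpow_natCast _ n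
    have hln : l^((n:ℝ)+δ) = l^n * l^δ := by
      rw [Real.rpow_add hl, Real.rpow_natCast]
    have hdivδ : (K.len/l)^δ = K.len^δ/l^δ := Real.div_rpow hlK.le hl.le δ
    have hlKn : K.len^n ≤ l^n := pow_le_pow_left₀ hlK.le hKl n
    have hlδ : (0:ℝ) < l^δ := Real.rpow_pos_of_pos hl δ
    have hm0 : (0:ℝ) ≤ mf k := (hmf0 k).le
    have hRHSeq : 128*24^n * ((2:ℝ)^(-((k+5:ℕ):ℝ)*θ)) * (K.len^n * (K.len/l)^δ) * Dk k
        = ((2:ℝ)^(-((k+5:ℕ):ℝ)*θ) * (2:ℝ)^((k:ℝ)*θ)) * 32 *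
          (24^n * K.len^n * K.len^δ * ((mf k)^n * l^n)) := by
      simp only [hDdef]
      rw [hdivδ, hmn, hln]
      field_simp
      ring
    have hLHSeq : K.len^δ * (K.len^n * (3*K.len)^n * ((2:ℝ)^(k+1)*l)^n)
        = 24^n * K.len^n * K.len^δ * ((mf k)^n * K.len^n) := by
      rw [h8, mul_pow 3 K.len, h24]
      ring
    have hcore : K.len^δ * (K.len^n * (3*K.len)^n * ((2:ℝ)^(k+1)*l)^n)
        ≤ 128*24^n * ((2:ℝ)^(-((k+5:ℕ):ℝ)*θ)) * (K.len^n * (K.len/l)^δ) * Dk k := by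
      rw [hRHSeq, hLHSeq]
      have hnn : (0:ℝ) ≤ 24^n * K.len^n * K.len^δ :=
        mul_nonneg (mul_nonneg (by positivity) (by positivity)) (Real.rpow_nonneg hlK.le δ)
      have hstep : (24:ℝ)^n * K.len^n * K.len^δ * ((mf k)^n * K.len^n)
          ≤ 24^n * K.len^n * K.len^δ * ((mf k)^n * l^n) := by
        apply mul_le_mul_of_nonneg_left _ hnn
        exact mul_le_mul_of_nonneg_left hlKn (pow_nonneg hm0 n)
      have h1le : (1:ℝ) ≤ ((2:ℝ)^(-((k+5:ℕ):ℝ)*θ) * (2:ℝ)^((k:ℝ)*θ)) * 32 := by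
        nlinarith
      have hnn2 : (0:ℝ) ≤ 24^n * K.len^n * K.len^δ * ((mf k)^n * l^n) :=
        mul_nonneg hnn (mul_nonneg (pow_nonneg hm0 n) (by positivity))
      calc (24:ℝ)^n * K.len^n * K.len^δ * ((mf k)^n * K.len^n)
          ≤ 24^n * K.len^n * K.len^δ * ((mf k)^n * l^n) := hstep
        _ ≤ ((2:ℝ)^(-((k+5:ℕ):ℝ)*θ) * (2:ℝ)^((k:ℝ)*θ)) * 32 *
            (24^n * K.len^n * K.len^δ * ((mf k)^n * l^n)) :=
            le_mul_of_one_le_left hnn2 h1le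
    have hfe : 0 ≤ F₁ K.len * F₂ K.len * F₃ (ρ k) :=
      mul_nonneg (mul_nonneg (h1p _) (h2p _)) (h3p _)
    have htkeq : tk k = (F₁ K.len * F₂ K.len * F₃ (ρ k)) *
        (K.len^δ * (K.len^n * (3*K.len)^n * ((2:ℝ)^(k+1)*l)^n) / Dk k) := by
      simp only [htdef, hpbdef]
      ring
    have hukeq : uk k = (F₁ K.len * F₂ K.len * F₃ (ρ k)) *
        (128*24^n * ((2:ℝ)^(-((k+5:ℕ):ℝ)*θ)) * (K.len^n * (K.len/l)^δ)) := by
      simp only [hudef]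
      rw [hgk5]
      ring
    rw [htkeq, hukeq]
    apply mul_le_mul_of_nonneg_left _ hfe
    rw [div_le_iff₀ (hDk0 k)]
    exact hcore
  -- summation
  have hsum5 : Summable (fun k : ℕ => g (k+5)) :=
    hgs.comp_injective (add_left_injective 5)
  have hsum5le : (∑' k : ℕ, g (k+5)) ≤ ∑' j, g j :=
    Summable.tsum_le_tsum_of_inj (fun k => k + 5) (add_left_injective 5)
      (fun c _ => hg0 c) (fun i => le_rfl) hsum5 hgs
  have hCst0 : (0:ℝ) ≤ 128*24^n * (F₁ K.len * F₂ K.len) * (K.len^n * (K.len/l)^δ) :=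
    mul_nonneg (mul_nonneg (by positivity) (mul_nonneg (h1p _) (h2p _)))
      (mul_nonneg (by positivity) (Real.rpow_nonneg (by positivity) δ))
  have huks : Summable uk := by
    simp only [hudef]
    exact hsum5.mul_left _
  have hu0 : ∀ k, 0 ≤ uk k := fun k => by
    simp only [hudef]
    exact mul_nonneg hCst0 (hg0 _)
  have hfinal : (∑' k, uk k) ≤ 128*24^n * F₁ K.len * F₂ K.len * Ft3 θ F₃ J *
      (volume K.toSet).toReal * (K.len/l)^δ := by
    have h1 : (∑' k, uk k) = (128*24^n * (F₁ K.len * F₂ K.len) * (K.len^n * (K.len/l)^δ)) *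
        ∑' k, g (k+5) := by
      simp only [hudef]
      exact tsum_mul_left
    have hFt3' : (∑' k : ℕ, g (k+5)) ≤ Ft3 θ F₃ J := by rw [hFt3]; exact hsum5le
    have hvr : (volume K.toSet).toReal = K.len^n := by
      rw [cube_volume, ENNReal.toReal_ofReal (by positivity)]
    rw [h1, hvr]
    calc 128*24^n * (F₁ K.len * F₂ K.len) * (K.len^n * (K.len/l)^δ) * ∑' k, g (k+5)
        ≤ 128*24^n * (F₁ K.len * F₂ K.len) * (K.len^n * (K.len/l)^δ) * Ft3 θ F₃ J :=
          mul_le_mul_of_nonneg_left hFt3' hCst0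
      _ = 128*24^n * F₁ K.len * F₂ K.len * Ft3 θ F₃ J * K.len^n * (K.len/l)^δ := by ring
  -- assemble
  calc (∫⁻ z in (J.toSet)ᶜ, ∫⁻ y in (K.dilate 3 (by norm_num)).toSet, ∫⁻ x in K.toSet,
        ENNReal.ofReal
          (F₁ (dist x K.center) * F₂ (dist x y + dist x z) *
            F₃ (1 + (‖x + y‖ + ‖x + z‖) / (1 + dist x y + dist x z)) *
            K.len ^ δ / (dist x y + dist x z) ^ (2 * (n : ℝ) + δ)))
      ≤ ∫⁻ z in ⋃ k, (A k ∩ (J.toSet)ᶜ), ∫⁻ y in (K.dilate 3 (by norm_num)).toSet,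
          ∫⁻ x in K.toSet, ENNReal.ofReal
          (F₁ (dist x K.center) * F₂ (dist x y + dist x z) *
            F₃ (1 + (‖x + y‖ + ‖x + z‖) / (1 + dist x y + dist x z)) *
            K.len ^ δ / (dist x y + dist x z) ^ (2 * (n : ℝ) + δ)) :=
        lintegral_mono_set hcover
    _ ≤ ∑' k : ℕ, ∫⁻ z in A k ∩ (J.toSet)ᶜ, ∫⁻ y in (K.dilate 3 (by norm_num)).toSet,
          ∫⁻ x in K.toSet, ENNReal.ofReal
          (F₁ (dist x K.center) * F₂ (dist x y + dist x z) *
            F₃ (1 + (‖x + y‖ + ‖x + z‖) / (1 + dist x y + dist x z)) *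
            K.len ^ δ / (dist x y + dist x z) ^ (2 * (n : ℝ) + δ)) :=
        lintegral_iUnion_le _ _
    _ ≤ ∑' k : ℕ, ENNReal.ofReal (tk k) := ENNReal.tsum_le_tsum hstep2
    _ ≤ ∑' k : ℕ, ENNReal.ofReal (uk k) :=
        ENNReal.tsum_le_tsum (fun k => ENNReal.ofReal_le_ofReal (htu k))
    _ = ENNReal.ofReal (∑' k, uk k) := (ENNReal.ofReal_tsum_of_nonneg hu0 huks).symm
    _ ≤ ENNReal.ofReal (128 * 24 ^ n * F₁ K.len * F₂ K.len * Ft3 θ F₃ J *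
          (volume K.toSet).toReal * (K.len / l) ^ δ) := by
        apply ENNReal.ofReal_le_ofReal
        have hvr : (volume K.toSet).toReal = K.len^n := by
          rw [cube_volume, ENNReal.toReal_ofReal (by positivity)]
        rw [hvr] at hfinal ⊢
        linarith [hfinal]
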